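/- Let k ≥ 1 be an integer and let p be an integer with 1 ≤ p ≤ k. For every finitely supported sequence α = (α_n)_{n∈ℤ} of complex numbers, ‖(S−1)α‖_{2k/p}² ≤ ((2k−p)/p) ‖(S−1)²α‖_{2k/(p+1)} ‖α‖_{2k/(p−1)}, where for p = 1 the exponent 2k/(p−1) = ∞ is interpreted as the supremum norm ‖α‖_∞ = sup_n |α_n|. -/

import Mathlib

/-!
With `Q = 2k/p ≥ 2`, `b = Δα` and the duality map `J u = ‖u‖^(Q-2) u` of `ℓ^Q`, one has
`⟪u, J u⟫ = ‖u‖^Q`, so summation by parts gives `S := ∑ ‖bₙ‖^Q = -∑ ⟪αₙ₊₁, J bₙ₊₁ - J bₙ⟫`.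
Differentiating `J` along the segment from `bₙ` to `bₙ₊₁` bounds `‖J bₙ₊₁ - J bₙ‖` by
`(Q-1) ‖Δ²αₙ‖ ∫₀¹ hₜ(n)^(Q-2) dt`, where `hₜ(n) = (1-t)‖bₙ‖ + t‖bₙ₊₁‖`. For each `t`, Hölder with
exponents `Q/2`, `Q/(Q-2)` and the convexity bound `∑ hₜ^Q ≤ S` give
`S ≤ (Q-1) ‖α(·+1) Δ²α‖_{Q/2} S^(1-2/Q)`, that is, `‖Δα‖_Q² ≤ (Q-1) ‖α(·+1) Δ²α‖_{Q/2}`.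
Hölder with exponents `2k/(p-1)` and `2k/(p+1)` (the sup bound when `p = 1`) splits the last norm.
-/

open Function Set MeasureTheory
open scoped RealInnerProductSpace fwdDiff

lemma Function.HasFiniteSupport.fwdDiff {G : Type*} [AddCommGroup G] {f : ℤ → G}
    (hf : f.HasFiniteSupport) : (Δ_[1] f).HasFiniteSupport := by
  unfold _root_.fwdDiff
  fun_prop (disch := exact add_left_injective 1)

lemma Function.HasFiniteSupport.summable_norm_rpow {ι F : Type*} [NormedAddCommGroup F]
    {f : ι → F} (hf : f.HasFiniteSupport) {r : ℝ} (hr : r ≠ 0) : Summable fun i => ‖f i‖ ^ r :=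
  summable_of_hasFiniteSupport <| hf.fun_comp (g := fun u => ‖u‖ ^ r) (by simp [Real.zero_rpow hr])

lemma rpow_le_of_le_mul_rpow_one_sub {S K e : ℝ} (hS : 0 ≤ S) (hK : 0 ≤ K) (he : 0 < e)
    (h : S ≤ K * S ^ (1 - e)) : S ^ e ≤ K := by
  rcases hS.eq_or_lt with rfl | hS
  · rwa [Real.zero_rpow he.ne']
  calc S ^ e = S ^ (1 : ℝ) / S ^ (1 - e) := by rw [← Real.rpow_sub hS]; ring_nf
    _ ≤ K := by rw [Real.rpow_one]; exact (div_le_iff₀ (Real.rpow_pos_of_pos hS _)).2 h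

lemma sum_mul_rpow_sub_two_le {ι : Type*} (s : Finset ι) {f h : ι → ℝ} (hf : ∀ i, 0 ≤ f i)
    (hh : ∀ i, 0 ≤ h i) {Q : ℝ} (hQ : 2 ≤ Q) :
    ∑ i ∈ s, f i * h i ^ (Q - 2) ≤
      (∑ i ∈ s, f i ^ (Q / 2)) ^ (2 / Q) * (∑ i ∈ s, h i ^ Q) ^ (1 - 2 / Q) := by
  rcases hQ.eq_or_lt with rfl | hQ
  · norm_num
  have hconj : (Q / 2).HolderConjugate (Q / (Q - 2)) :=
    Real.holderConjugate_iff.2 ⟨by linarith, by field_simp; ring⟩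
  convert Real.inner_le_Lp_mul_Lq_of_nonneg s hconj (fun i _ => hf i)
    (fun i _ => Real.rpow_nonneg (hh i) (Q - 2)) using 3
  · rw [one_div_div]
  · refine Finset.sum_congr rfl fun i _ => ?_
    rw [← Real.rpow_mul (hh i)]
    congr 1
    field_simp
  · field_simp

lemma sum_rpow_convexComb_shift_le {a : ℤ → ℝ} (ha : ∀ n, 0 ≤ a n) {Q : ℝ} (hQ : 1 ≤ Q)
    (hs : Summable fun n => a n ^ Q) {t : ℝ} (ht₀ : 0 ≤ t) (ht₁ : t ≤ 1) (J : Finset ℤ) :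
    ∑ n ∈ J, ((1 - t) * a n + t * a (n + 1)) ^ Q ≤ ∑' n, a n ^ Q := by
  have hs₁ : Summable fun n => a (n + 1) ^ Q :=
    ((Equiv.addRight 1).summable_iff (f := fun n => a n ^ Q)).2 hs
  have hshift : ∑' n, a (n + 1) ^ Q = ∑' n, a n ^ Q :=
    (Equiv.addRight 1).tsum_eq fun n => a n ^ Q
  have hpos : ∀ n, 0 ≤ a n ^ Q := fun n => Real.rpow_nonneg (ha n) Q
  calc ∑ n ∈ J, ((1 - t) * a n + t * a (n + 1)) ^ Q
      ≤ ∑ n ∈ J, ((1 - t) * a n ^ Q + t * a (n + 1) ^ Q) := Finset.sum_le_sum fun n _ =>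
        (convexOn_rpow hQ).2 (ha n) (ha (n + 1)) (sub_nonneg.2 ht₁) ht₀ (by ring)
    _ = (1 - t) * ∑ n ∈ J, a n ^ Q + t * ∑ n ∈ J, a (n + 1) ^ Q := by
        rw [Finset.sum_add_distrib, Finset.mul_sum, Finset.mul_sum]
    _ ≤ (1 - t) * ∑' n, a n ^ Q + t * ∑' n, a (n + 1) ^ Q := by
        gcongr
        · exact hs.sum_le_tsum J fun n _ => hpos n
        · exact hs₁.sum_le_tsum J fun n _ => hpos (n + 1)
    _ = ∑' n, a n ^ Q := by rw [hshift]; ring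

lemma Lr_le_mul_Lr_tsum_of_le {ι : Type*} {f g : ι → ℝ} {M q : ℝ} (hf : ∀ i, 0 ≤ f i)
    (hfM : ∀ i, f i ≤ M) (hM : 0 ≤ M) (hg : ∀ i, 0 ≤ g i) (hq : 0 < q)
    (hgs : Summable fun i => g i ^ q) :
    (∑' i, (f i * g i) ^ q) ^ (1 / q) ≤ M * (∑' i, g i ^ q) ^ (1 / q) := by
  have hfg : ∀ i, 0 ≤ (f i * g i) ^ q := fun i => by have := hf i; have := hg i; positivity
  have hle : ∀ i, (f i * g i) ^ q ≤ M ^ q * g i ^ q := fun i => by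
    rw [Real.mul_rpow (hf i) (hg i)]
    have := hg i
    gcongr
    exacts [hf i, hfM i]
  have hsum : ∑' i, (f i * g i) ^ q ≤ M ^ q * ∑' i, g i ^ q := by
    rw [← tsum_mul_left]
    exact (hgs.mul_left _ |>.of_nonneg_of_le hfg hle).tsum_le_tsum hle (hgs.mul_left _)
  calc _ ≤ (M ^ q * ∑' i, g i ^ q) ^ (1 / q) := by gcongr; exact tsum_nonneg hfg
    _ = M * (∑' i, g i ^ q) ^ (1 / q) := by
        rw [Real.mul_rpow (by positivity) (tsum_nonneg fun i => Real.rpow_nonneg (hg i) q),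
          ← Real.rpow_mul hM, mul_one_div_cancel hq.ne', Real.rpow_one]

section InnerProductSpace

variable {E : Type*} [NormedAddCommGroup E] [InnerProductSpace ℝ E]

noncomputable def dualityMap (Q : ℝ) (u : E) : E := ‖u‖ ^ (Q - 2) • u

lemma inner_self_dualityMap {Q : ℝ} (hQ : Q ≠ 0) (u : E) : ⟪u, dualityMap Q u⟫ = ‖u‖ ^ Q := by
  rcases eq_or_ne u 0 with rfl | hu
  · simp [dualityMap, Real.zero_rpow hQ]
  rw [dualityMap, real_inner_smul_right, real_inner_self_eq_norm_sq, ← Real.rpow_natCast,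
    ← Real.rpow_add (norm_pos_iff.2 hu)]
  norm_num

lemma continuous_dualityMap {Q : ℝ} (hQ : 2 ≤ Q) : Continuous (dualityMap Q : E → E) :=
  ((Real.continuous_rpow_const (by linarith)).comp continuous_norm).smul continuous_id

lemma hasDerivAt_dualityMap_comp {Q : ℝ} {γ : ℝ → E} {v : E} {t : ℝ} (hγ : HasDerivAt γ v t)
    (h0 : γ t ≠ 0) :
    HasDerivAt (fun s => dualityMap Q (γ s))
      (‖γ t‖ ^ (Q - 2) • v + ((Q - 2) * ‖γ t‖ ^ (Q - 4) * ⟪γ t, v⟫) • γ t) t := by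
  have hsq : ∀ x : ℝ, 0 ≤ x → ∀ a : ℝ, (x ^ 2) ^ (a / 2) = x ^ a := fun x hx a => by
    rw [← Real.rpow_natCast_mul hx]; ring_nf
  have hpow := (hγ.norm_sq.rpow_const (p := (Q - 2) / 2) (Or.inl (by positivity))).smul hγ
  simp only [hsq _ (norm_nonneg _)] at hpow
  convert hpow using 1
  · rfl
  · rw [show (Q - 2) / 2 - 1 = (Q - 4) / 2 by ring, hsq _ (norm_nonneg _)]
    ring_nf

lemma norm_dualityMap_deriv_le {Q : ℝ} (hQ : 2 ≤ Q) {u : E} (hu : u ≠ 0) (v : E) :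
    ‖‖u‖ ^ (Q - 2) • v + ((Q - 2) * ‖u‖ ^ (Q - 4) * ⟪u, v⟫) • u‖ ≤
      (Q - 1) * ‖u‖ ^ (Q - 2) * ‖v‖ := by
  have hQ' := sub_nonneg.2 hQ
  have hpow : ‖u‖ ^ (Q - 4) * ‖u‖ * ‖u‖ = ‖u‖ ^ (Q - 2) := by
    rw [mul_assoc, ← sq, ← Real.rpow_natCast, ← Real.rpow_add (norm_pos_iff.2 hu)]; ring_nf
  calc _ ≤ ‖u‖ ^ (Q - 2) * ‖v‖ + (Q - 2) * ‖u‖ ^ (Q - 4) * |⟪u, v⟫| * ‖u‖ := by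
        refine (norm_add_le _ _).trans_eq ?_
        rw [norm_smul, norm_smul, Real.norm_of_nonneg (by positivity), Real.norm_eq_abs,
          abs_mul, abs_of_nonneg (by positivity)]
    _ ≤ ‖u‖ ^ (Q - 2) * ‖v‖ + (Q - 2) * ‖u‖ ^ (Q - 4) * (‖u‖ * ‖v‖) * ‖u‖ := by
        gcongr
        exact abs_real_inner_le_norm u v
    _ = (Q - 1) * ‖u‖ ^ (Q - 2) * ‖v‖ := by rw [← hpow]; ring

lemma norm_add_smul_sub_le (w z : E) {t : ℝ} (h0 : 0 ≤ t) (h1 : t ≤ 1) :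
    ‖w + t • (z - w)‖ ≤ (1 - t) * ‖w‖ + t * ‖z‖ := by
  have h := (convexOn_norm (convex_univ (𝕜 := ℝ) (E := E))).2 (mem_univ w) (mem_univ z)
    (sub_nonneg.2 h1) h0 (by ring)
  rw [smul_eq_mul, smul_eq_mul] at h
  exact (congrArg norm (by module)).trans_le h

lemma norm_dualityMap_sub_le [CompleteSpace E] {Q : ℝ} (hQ : 2 ≤ Q) (w z : E) :
    ‖dualityMap Q z - dualityMap Q w‖ ≤
      (Q - 1) * ‖z - w‖ * ∫ t in (0 : ℝ)..1, ((1 - t) * ‖w‖ + t * ‖z‖) ^ (Q - 2) := by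
  rcases eq_or_ne z w with rfl | hv
  · simp
  set v := z - w
  set f : ℝ → E := fun t => dualityMap Q (w + t • v)
  set g : ℝ → ℝ := fun t => (Q - 1) * ‖v‖ * ((1 - t) * ‖w‖ + t * ‖z‖) ^ (Q - 2)
  -- `f` may fail to be differentiable only where the segment meets `0`, which happens at most once.
  set s : Set ℝ := {t | w + t • v = 0}
  have hs : s.Countable := Set.Subsingleton.countable fun t₁ h₁ t₂ h₂ =>
    smul_left_injective ℝ (sub_ne_zero.2 hv) (add_left_cancel (h₁.trans h₂.symm))
  have hline : ∀ t, HasDerivAt (fun t => w + t • v) v t := fun t =>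
    ((hasDerivAt_id t).smul_const (𝕜' := ℝ) v).const_add w |>.congr_deriv (one_smul ℝ v)
  have hbound : ∀ᵐ t, t ∈ Ioc (0 : ℝ) 1 → ‖deriv f t‖ ≤ g t := by
    filter_upwards [measure_eq_zero_iff_ae_notMem.1 (hs.measure_zero volume)] with t ht ht01
    rw [(hasDerivAt_dualityMap_comp (hline t) ht).deriv]
    refine (norm_dualityMap_deriv_le hQ ht v).trans ?_
    have := norm_add_smul_sub_le w z ht01.1.le ht01.2
    calc _ ≤ (Q - 1) * ((1 - t) * ‖w‖ + t * ‖z‖) ^ (Q - 2) * ‖v‖ := by gcongr; linarith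
      _ = g t := by ring
  have hg : IntervalIntegrable g volume 0 1 := Continuous.intervalIntegrable
    (continuous_const.mul ((Real.continuous_rpow_const (by linarith)).comp (by fun_prop))) 0 1
  have hint : IntervalIntegrable (deriv f) volume 0 1 :=
    hg.mono_fun' (aestronglyMeasurable_deriv f _) <| by
      rw [uIoc_of_le zero_le_one]
      exact (ae_restrict_iff' measurableSet_Ioc).2 hbound
  have hFTC := integral_eq_of_hasDerivAt_off_countable_of_le f (deriv f) zero_le_one hs
    ((continuous_dualityMap hQ).comp (by fun_prop)).continuousOn
    (fun t ht => ((hasDerivAt_dualityMap_comp (hline t) ht.2).differentiableAt).hasDerivAt) hint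
  simp only [f, v, zero_smul, add_zero, one_smul, add_sub_cancel] at hFTC
  rw [← hFTC, ← intervalIntegral.integral_const_mul]
  exact intervalIntegral.norm_integral_le_of_norm_le zero_le_one hbound hg

lemma tsum_inner_fwdDiff_eq_neg {u : ℤ → E} (hu : u.HasFiniteSupport) (w : ℤ → E) :
    ∑' n, ⟪Δ_[1] u n, w n⟫ = -∑' n, ⟪u (n + 1), Δ_[1] w n⟫ := by
  have hu₁ : HasFiniteSupport fun n => u (n + 1) := hu.fun_comp_of_injective (add_left_injective 1)
  have hsum : ∀ w' : ℤ → E, Summable fun n => ⟪u (n + 1), w' n⟫ := fun w' =>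
    summable_of_hasFiniteSupport <| hu₁.subset <| support_subset_iff'.2 fun n hn => by
      rw [notMem_support.1 hn, inner_zero_left]
  have hsum₀ : Summable fun n => ⟪u n, w n⟫ :=
    (Equiv.addRight 1).summable_iff.1 (hsum fun n => w (n + 1))
  have hshift : ∑' n, ⟪u n, w n⟫ = ∑' n, ⟪u (n + 1), w (n + 1)⟫ :=
    ((Equiv.addRight 1).tsum_eq fun n => ⟪u n, w n⟫).symm
  simp only [fwdDiff, inner_sub_left, inner_sub_right]
  rw [(hsum w).tsum_sub hsum₀, hshift, (hsum _).tsum_sub (hsum w), neg_sub]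

lemma tsum_norm_fwdDiff_rpow_le_tsum_norm_mul {Q : ℝ} (hQ : Q ≠ 0) {α : ℤ → E}
    (hα : α.HasFiniteSupport) :
    ∑' n, ‖Δ_[1] α n‖ ^ Q ≤
      ∑' n, ‖α (n + 1)‖ * ‖dualityMap Q (Δ_[1] α (n + 1)) - dualityMap Q (Δ_[1] α n)‖ := by
  have hα₁ : HasFiniteSupport fun n => α (n + 1) := hα.fun_comp_of_injective (add_left_injective 1)
  have hsum : ∀ f : ℤ → ℝ, (∀ n, α (n + 1) = 0 → f n = 0) → Summable f := fun f hf =>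
    summable_of_hasFiniteSupport <| hα₁.subset <| support_subset_iff'.2 fun n hn =>
      hf n (notMem_support.1 hn)
  calc ∑' n, ‖Δ_[1] α n‖ ^ Q = ∑' n, ⟪Δ_[1] α n, dualityMap Q (Δ_[1] α n)⟫ :=
        tsum_congr fun n => (inner_self_dualityMap hQ _).symm
    _ = ∑' n, -⟪α (n + 1), Δ_[1] (fun n => dualityMap Q (Δ_[1] α n)) n⟫ := by
        rw [tsum_inner_fwdDiff_eq_neg hα, tsum_neg]
    _ ≤ _ := Summable.tsum_le_tsum
        (fun n => (neg_le_abs _).trans (abs_real_inner_le_norm _ _))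
        (hsum _ fun n hn => by simp [hn]) (hsum _ fun n hn => by simp [hn])

lemma tsum_norm_fwdDiff_rpow_le_of_forall_le [CompleteSpace E] {Q : ℝ} (hQ : 2 ≤ Q) {α : ℤ → E}
    (hα : α.HasFiniteSupport) {J : Finset ℤ} (hJ : ∀ n ∉ J, α (n + 1) = 0) {C : ℝ}
    (hC : ∀ t ∈ Icc (0 : ℝ) 1, ∑ n ∈ J, ‖α (n + 1)‖ * ‖Δ_[1] (Δ_[1] α) n‖ *
      ((1 - t) * ‖Δ_[1] α n‖ + t * ‖Δ_[1] α (n + 1)‖) ^ (Q - 2) ≤ C) :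
    ∑' n, ‖Δ_[1] α n‖ ^ Q ≤ (Q - 1) * C := by
  set F : ℤ → ℝ → ℝ := fun n t => ‖α (n + 1)‖ * ‖Δ_[1] (Δ_[1] α) n‖ *
    ((1 - t) * ‖Δ_[1] α n‖ + t * ‖Δ_[1] α (n + 1)‖) ^ (Q - 2)
  have hF : ∀ n, Continuous (F n) := fun n =>
    continuous_const.mul ((Real.continuous_rpow_const (by linarith)).comp (by fun_prop))
  have hmean : ∑' n, ‖Δ_[1] α n‖ ^ Q ≤ (Q - 1) * ∫ t in (0 : ℝ)..1, ∑ n ∈ J, F n t := by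
    refine (tsum_norm_fwdDiff_rpow_le_tsum_norm_mul (by positivity) hα).trans ?_
    rw [tsum_eq_sum fun n hn => by simp [hJ n hn], intervalIntegral.integral_finsetSum
      fun n _ => (hF n).intervalIntegrable 0 1, Finset.mul_sum]
    refine Finset.sum_le_sum fun n _ => ?_
    calc _ ≤ ‖α (n + 1)‖ * ((Q - 1) * ‖Δ_[1] (Δ_[1] α) n‖ *
          ∫ t in (0 : ℝ)..1, ((1 - t) * ‖Δ_[1] α n‖ + t * ‖Δ_[1] α (n + 1)‖) ^ (Q - 2)) := by
          gcongr; exact norm_dualityMap_sub_le hQ _ _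
      _ = _ := by simp only [F]; rw [intervalIntegral.integral_const_mul]; ring
  have hint : ∫ t in (0 : ℝ)..1, ∑ n ∈ J, F n t ≤ C :=
    (intervalIntegral.integral_mono_on zero_le_one
      ((continuous_finsetSum J fun n _ => hF n).intervalIntegrable 0 1) intervalIntegrable_const
      hC).trans_eq (by simp)
  exact hmean.trans (by gcongr; linarith)

theorem rpow_tsum_norm_fwdDiff_le [CompleteSpace E] {Q : ℝ} (hQ : 2 ≤ Q) {α : ℤ → E}
    (hα : α.HasFiniteSupport) :
    (∑' n, ‖Δ_[1] α n‖ ^ Q) ^ (2 / Q) ≤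
      (Q - 1) * (∑' n, (‖α (n + 1)‖ * ‖Δ_[1] (Δ_[1] α) n‖) ^ (Q / 2)) ^ (2 / Q) := by
  set a : ℤ → ℝ := fun n => ‖Δ_[1] α n‖
  set x : ℤ → ℝ := fun n => ‖α (n + 1)‖ * ‖Δ_[1] (Δ_[1] α) n‖
  set S := ∑' n, a n ^ Q
  set P := (∑' n, x n ^ (Q / 2)) ^ (2 / Q)
  obtain ⟨J, hJ⟩ : ∃ J : Finset ℤ, ∀ n ∉ J, α (n + 1) = 0 := by
    have hα₁ : HasFiniteSupport fun n => α (n + 1) :=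
      hα.fun_comp_of_injective (add_left_injective 1)
    exact ⟨hα₁.toFinset, fun n hn => notMem_support.1 (mt hα₁.mem_toFinset.2 hn)⟩
  have hS : Summable fun n => a n ^ Q := hα.fwdDiff.summable_norm_rpow (by positivity)
  have hP : ∑' n, x n ^ (Q / 2) = ∑ n ∈ J, x n ^ (Q / 2) :=
    tsum_eq_sum fun n hn => by simp [x, hJ n hn, Real.zero_rpow (by positivity : Q / 2 ≠ 0)]
  have hfixed : ∀ t ∈ Icc (0 : ℝ) 1,
      ∑ n ∈ J, x n * ((1 - t) * a n + t * a (n + 1)) ^ (Q - 2) ≤ P * S ^ (1 - 2 / Q) := by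
    intro t ht
    have hh : ∀ n, 0 ≤ (1 - t) * a n + t * a (n + 1) := fun n => by
      have := sub_nonneg.2 ht.2; have := ht.1; positivity
    refine (sum_mul_rpow_sub_two_le J (fun n => by positivity) hh hQ).trans ?_
    rw [← hP]
    gcongr
    · exact Finset.sum_nonneg fun n _ => Real.rpow_nonneg (hh n) Q
    · exact sub_nonneg.2 ((div_le_one (by linarith)).2 hQ)
    · exact sum_rpow_convexComb_shift_le (fun n => norm_nonneg _) (by linarith) hS ht.1 ht.2 J
  refine rpow_le_of_le_mul_rpow_one_sub (tsum_nonneg fun n => by positivity)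
    (mul_nonneg (by linarith) (by positivity)) (by positivity) ?_
  calc S ≤ (Q - 1) * (P * S ^ (1 - 2 / Q)) :=
        tsum_norm_fwdDiff_rpow_le_of_forall_le hQ hα hJ hfixed
    _ = (Q - 1) * P * S ^ (1 - 2 / Q) := by ring

end InnerProductSpace

lemma rpow_tsum_norm_mul_norm_le {F : Type*} [NormedAddCommGroup F] {α β : ℤ → F}
    (hα : α.HasFiniteSupport) (hβ : β.HasFiniteSupport) {k p : ℕ} (hp : 1 ≤ p) (hpk : p ≤ k) :
    (∑' n, (‖α (n + 1)‖ * ‖β n‖) ^ ((k : ℝ) / p)) ^ ((p : ℝ) / k) ≤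
      (∑' n, ‖β n‖ ^ ((2 * k : ℝ) / (p + 1))) ^ ((p + 1 : ℝ) / (2 * k)) *
        (if p = 1 then ⨆ n, ‖α n‖
          else (∑' n, ‖α n‖ ^ ((2 * k : ℝ) / ((p : ℝ) - 1))) ^ (((p : ℝ) - 1) / (2 * k))) := by
  have hk : (0 : ℝ) < k := by exact_mod_cast (by omega : 0 < k)
  split_ifs with hp1
  · subst hp1
    have hbdd : BddAbove (range fun n => ‖α n‖) :=
      ((hα.fun_comp norm_zero).image _ |>.insert 0).bddAbove.mono
        (range_subset_insert_image_support _)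
    have h := Lr_le_mul_Lr_tsum_of_le (f := fun n => ‖α (n + 1)‖) (fun n => norm_nonneg _)
      (fun n => le_ciSup hbdd (n + 1)) (Real.iSup_nonneg fun n => norm_nonneg _)
      (fun n => norm_nonneg (β n)) hk (hβ.summable_norm_rpow hk.ne')
    rw [mul_comm]
    convert h using 3 <;> norm_num
    field_simp
  · have hp' : (1 : ℝ) < p := by exact_mod_cast (by omega : 1 < p)
    have hpqr : (2 * k / ((p : ℝ) - 1)).HolderTriple (2 * k / (p + 1)) (k / p) :=
      ⟨by field_simp; ring, by positivity, by positivity⟩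
    have hshift : ∑' n, ‖α (n + 1)‖ ^ (2 * k / ((p : ℝ) - 1)) =
        ∑' n, ‖α n‖ ^ (2 * k / ((p : ℝ) - 1)) :=
      (Equiv.addRight 1).tsum_eq fun n => ‖α n‖ ^ (2 * k / ((p : ℝ) - 1))
    have h := Real.Lr_le_Lp_mul_Lq_tsum_of_nonneg hpqr (f := fun n => ‖α (n + 1)‖)
      (fun n => norm_nonneg _) (fun n => norm_nonneg (β n))
      (((Equiv.addRight 1).summable_iff (f := fun n => ‖α n‖ ^ _)).2
        (hα.summable_norm_rpow hpqr.left_pos.ne'))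
      (hβ.summable_norm_rpow hpqr.right_pos.ne')
    rw [hshift, one_div_div, one_div_div, one_div_div] at h
    rw [mul_comm]
    exact h

theorem stmt3_general (k p : ℕ) (hp : 1 ≤ p) (hpk : p ≤ k) (α : ℤ → ℂ)
    (hfin : {n : ℤ | α n ≠ 0}.Finite) :
    (∑' n : ℤ, ‖α (n + 1) - α n‖ ^ ((2 * k : ℝ) / p)) ^ ((p : ℝ) / k) ≤
      ((2 * k - p : ℝ) / p) *
        (∑' n : ℤ, ‖α (n + 2) - 2 * α (n + 1) + α n‖ ^ ((2 * k : ℝ) / (p + 1))) ^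
          ((p + 1 : ℝ) / (2 * k)) *
        (if p = 1 then ⨆ n : ℤ, ‖α n‖
          else (∑' n : ℤ, ‖α n‖ ^ ((2 * k : ℝ) / ((p : ℝ) - 1))) ^ (((p : ℝ) - 1) / (2 * k))) := by
  have hα : α.HasFiniteSupport := hfin
  have hp₀ : (0 : ℝ) < p := by exact_mod_cast hp
  have hpk' : (p : ℝ) ≤ k := by exact_mod_cast hpk
  have hQ : 2 ≤ (2 * k : ℝ) / p := by rw [le_div_iff₀ hp₀]; linarith
  have hΔ₂ : ∀ n, Δ_[1] (Δ_[1] α) n = α (n + 2) - 2 * α (n + 1) + α n := fun n => by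
    simp only [fwdDiff]; ring_nf
  have key := rpow_tsum_norm_fwdDiff_le hQ hα
  rw [show 2 / ((2 * k : ℝ) / p) = p / k by field_simp, show (2 * k : ℝ) / p / 2 = k / p by ring,
    show (2 * k : ℝ) / p - 1 = (2 * k - p) / p by field_simp] at key
  simp_rw [← hΔ₂]
  refine key.trans ?_
  rw [mul_assoc]
  gcongr
  · exact div_nonneg (by linarith) hp₀.le
  · exact rpow_tsum_norm_mul_norm_le hα hα.fwdDiff.fwdDiff hp hpk

theorem stmt3 (k p : ℕ) (hk : 1 ≤ k) (hp : 1 ≤ p) (hpk : p ≤ k) (α : ℤ → ℂ)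
    (hfin : {n : ℤ | α n ≠ 0}.Finite) :
    (∑' n : ℤ, ‖α (n + 1) - α n‖ ^ ((2 * k : ℝ) / p)) ^ ((p : ℝ) / k) ≤
      ((2 * k - p : ℝ) / p) *
        (∑' n : ℤ, ‖α (n + 2) - 2 * α (n + 1) + α n‖ ^ ((2 * k : ℝ) / (p + 1))) ^
          ((p + 1 : ℝ) / (2 * k)) *
        (if p = 1 then ⨆ n : ℤ, ‖α n‖
          else (∑' n : ℤ, ‖α n‖ ^ ((2 * k : ℝ) / ((p : ℝ) - 1))) ^ (((p : ℝ) - 1) / (2 * k))) :=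
  stmt3_general k p hp hpk α hfin
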